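/- Let M = ⟨A | u = v⟩, let r compress u = v, and let P_{Δ_r} be the set of proper prefixes of elements of the prefix code Δ_r generating T(r). For t, t' ∈ A* and w, w' ∈ P_{Δ_r}: [t r w]_M = [t' r w']_M if and only if w = w' and [t r]_M = [t' r]_M. -/

import Mathlib

/-- The congruence on a free monoid generated by the single relation `u = v`. -/
def oneRelCon {A : Type*} (u v : FreeMonoid A) : Con (FreeMonoid A) :=
  conGen (fun a b => a = u ∧ b = v)

/-- `T(r) = {w ∈ A* : r·w ∈ A*·r}`. -/
def Tset {A : Type*} (r : FreeMonoid A) : Set (FreeMonoid A) :=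
  {w | ∃ y, r * w = y * r}

/-- `Δ_r`: the prefix code of irreducible elements of `T(r)`. -/
def Irr {A : Type*} (r : FreeMonoid A) : Set (FreeMonoid A) :=
  {w | w ∈ Tset r ∧ w ≠ 1 ∧ ¬ ∃ a b : FreeMonoid A,
        a ∈ Tset r ∧ b ∈ Tset r ∧ a ≠ 1 ∧ b ≠ 1 ∧ w = a * b}

/-- `P_{Δ_r}`: the set of proper prefixes of elements of `Δ_r`. -/
def ProperPrefixes {A : Type*} (r : FreeMonoid A) : Set (FreeMonoid A) :=
  {w | ∃ d ∈ Irr r, (∃ t, d = w * t) ∧ w ≠ d}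

/-! Since `u` and `v` both end in `r`, an elementary rewrite `p u q ↦ p v q` of a word `t r w`
whose displayed `r` is the last occurrence of `r` cannot reach into `w`: the occurrence of `r`
ending `u` lies no later than the displayed one. So every derivation starting at `t r w` is a derivation
starting at `t r`, followed by `w`, and `w` is recovered as what follows the last `r`. A proper
prefix `w` of some `d ∈ Δ_r` has this property: an occurrence `r w = x r s` with `x ≠ 1` would
split `d` into two nontrivial factors of `T(r)`. -/

open Relation

namespace FreeMonoid

variable {A : Type*} {a b c d : FreeMonoid A}

theorem mul_eq_mul_iff :
    a * b = c * d ↔ (∃ e, c = a * e ∧ b = e * d) ∨ ∃ e, a = c * e ∧ d = e * b :=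
  List.append_eq_append_iff

theorem exists_eq_mul_of_mul_eq_mul_of_length_le (h : a * b = c * d)
    (hca : c.length ≤ a.length) : ∃ e, a = c * e ∧ d = e * b := by
  rcases mul_eq_mul_iff.mp h with ⟨e, rfl, rfl⟩ | h
  · obtain rfl : e = 1 := length_eq_zero.mp (by rw [length_mul] at hca; omega)
    exact ⟨1, by simp, by simp⟩
  · exact h

theorem exists_eq_mul_of_mul_eq_mul_of_length_le' (h : a * b = c * d)
    (hdb : d.length ≤ b.length) : ∃ e, c = a * e ∧ b = e * d := by
  rcases mul_eq_mul_iff.mp h with h | ⟨e, rfl, rfl⟩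
  · exact h
  · obtain rfl : e = 1 := length_eq_zero.mp (by rw [length_mul] at hdb; omega)
    exact ⟨1, by simp, by simp⟩

end FreeMonoid

section Rewriting

variable {M : Type*} [Monoid M] {u v : M}

def Rewrites (u v z z' : M) : Prop :=
  ∃ p q, z = p * u * q ∧ z' = p * v * q

theorem Rewrites.symm {z z' : M} (h : Rewrites u v z z') : Rewrites v u z' z :=
  let ⟨p, q, hz, hz'⟩ := h
  ⟨p, q, hz', hz⟩

theorem Rewrites.mul_left {z z' : M} (c : M) (h : Rewrites u v z z') :
    Rewrites u v (c * z) (c * z') :=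
  let ⟨p, q, hz, hz'⟩ := h
  ⟨c * p, q, by simp only [hz, mul_assoc], by simp only [hz', mul_assoc]⟩

theorem Rewrites.mul_right {z z' : M} (c : M) (h : Rewrites u v z z') :
    Rewrites u v (z * c) (z' * c) :=
  let ⟨p, q, hz, hz'⟩ := h
  ⟨p, q * c, by simp only [hz, mul_assoc], by simp only [hz', mul_assoc]⟩

def rewritesCon (u v : M) : Con M where
  r := ReflTransGen (SymmGen (Rewrites u v))
  iseqv := ⟨fun _ => .refl, fun h => ReflTransGen.stdSymm.symm _ _ h,
    ReflTransGen.trans⟩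
  mul' {_ b c _} h₁ h₂ :=
    (ReflTransGen.lift (· * c) (fun _ _ h => h.imp (.mul_right c) (.mul_right c)) _ _ h₁).trans
      (ReflTransGen.lift (b * ·) (fun _ _ h => h.imp (.mul_left b) (.mul_left b)) _ _ h₂)

theorem conGen_eq_rewritesCon (u v : M) :
    conGen (fun a b => a = u ∧ b = v) = rewritesCon u v := by
  refine le_antisymm (Con.conGen_le.mpr ?_) fun x y h => ?_
  · rintro _ _ ⟨rfl, rfl⟩
    exact .single (.of_rel ⟨1, 1, by simp, by simp⟩)
  · induction h with
    | refl => exact (conGen _).refl x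
    | tail _ hstep ih =>
      refine (conGen _).trans ih ?_
      have hgen : conGen (fun a b => a = u ∧ b = v) u v := ConGen.Rel.of u v ⟨rfl, rfl⟩
      rcases hstep with ⟨p, q, rfl, rfl⟩ | ⟨p, q, rfl, rfl⟩
      · exact (conGen _).mul ((conGen _).mul ((conGen _).refl p) hgen) ((conGen _).refl q)
      · exact (conGen _).mul ((conGen _).mul ((conGen _).refl p) ((conGen _).symm hgen))
          ((conGen _).refl q)

end Rewriting

section RightCanonical

variable {A : Type*} {r s t t' w w' x y : FreeMonoid A}

theorem mem_tset_of_mul_mul_eq_mul (h : x * (r * s) = y * r) : s ∈ Tset r :=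
  let ⟨e, _, hs⟩ := FreeMonoid.exists_eq_mul_of_mul_eq_mul_of_length_le' h
    (by simp [FreeMonoid.length_mul])
  ⟨e, hs⟩

/-- Every factorization `t * r * w` is right canonical: the displayed `r` is the last occurrence
of `r`. -/
def IsRightCanonical (r w : FreeMonoid A) : Prop :=
  ∀ x s, r * w = x * (r * s) → x = 1

theorem isRightCanonical_of_mem_properPrefixes (hw : w ∈ ProperPrefixes r) :
    IsRightCanonical r w := by
  obtain ⟨_, ⟨⟨y, hy⟩, -, hirr⟩, ⟨t, rfl⟩, hne⟩ := hw
  intro x s h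
  by_contra hx
  obtain ⟨e, hxr, rfl⟩ := FreeMonoid.exists_eq_mul_of_mul_eq_mul_of_length_le
    (a := x * r) (b := s) (c := r) (d := w) (by rw [h, mul_assoc])
    (by simp [FreeMonoid.length_mul])
  have he : e ≠ 1 := by
    rintro rfl
    exact hx (mul_eq_right.mp (hxr.trans (mul_one r)))
  have hst : s * t ∈ Tset r :=
    mem_tset_of_mul_mul_eq_mul (x := x) (y := y) (by simp only [← hy, ← mul_assoc, hxr])
  have hst1 : s * t = 1 := by
    by_contra hst1
    exact hirr ⟨e, s * t, ⟨x, hxr.symm⟩, hst, he, hst1, by simp only [mul_assoc]⟩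
  obtain rfl := eq_one_of_mul_left' hst1
  exact hne (mul_one _).symm

theorem IsRightCanonical.eq_of_mul_eq (hw : IsRightCanonical r w) (hw' : IsRightCanonical r w')
    (h : t * r * w = t' * r * w') : t = t' ∧ w = w' := by
  rw [mul_assoc, mul_assoc] at h
  rcases FreeMonoid.mul_eq_mul_iff.mp h with ⟨e, rfl, he⟩ | ⟨e, rfl, he⟩
  · obtain rfl := hw e w' he
    exact ⟨(mul_one t).symm, mul_left_cancel (he.trans (one_mul _))⟩
  · obtain rfl := hw' e w he
    exact ⟨mul_one t', (mul_left_cancel (he.trans (one_mul _))).symm⟩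

theorem Rewrites.exists_of_isRightCanonical {u v z : FreeMonoid A} (hu : ∃ a, u = a * r)
    (hv : ∃ a, v = a * r) (hw : IsRightCanonical r w) (h : Rewrites u v (t * r * w) z) :
    ∃ t', z = t' * r * w ∧ Rewrites u v (t * r) (t' * r) := by
  obtain ⟨b, rfl⟩ := hu
  obtain ⟨e, rfl⟩ := hv
  obtain ⟨p, q, hz, rfl⟩ := h
  have hz' : t * (r * w) = p * b * (r * q) := by simp only [← mul_assoc, hz]
  rcases FreeMonoid.mul_eq_mul_iff.mp hz' with ⟨m, ht, hrw⟩ | ⟨m, rfl, hrq⟩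
  · -- the final `r` of `u` is the displayed one
    obtain rfl := hw m q hrw
    obtain rfl : w = q := mul_left_cancel (hrw.trans (one_mul _))
    rw [mul_one] at ht
    exact ⟨p * e, by simp only [mul_assoc], p, 1, by simp only [← ht, mul_assoc, mul_one],
      by simp only [mul_assoc, mul_one]⟩
  · -- `u` ends inside `t * r`
    obtain ⟨n, hmr, rfl⟩ := FreeMonoid.exists_eq_mul_of_mul_eq_mul_of_length_le
      (a := m * r) (b := w) (c := r) (d := q) (by rw [mul_assoc, hrq])
      (by simp [FreeMonoid.length_mul])
    exact ⟨p * e * m, by simp only [mul_assoc, hrq], p, n, by simp only [mul_assoc, hmr],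
      by simp only [mul_assoc, hmr]⟩

theorem exists_rewritesCon_of_isRightCanonical {u v z : FreeMonoid A} (hu : ∃ a, u = a * r)
    (hv : ∃ a, v = a * r) (hw : IsRightCanonical r w) (h : rewritesCon u v (t * r * w) z) :
    ∃ t', z = t' * r * w ∧ rewritesCon u v (t * r) (t' * r) := by
  induction h with
  | refl => exact ⟨t, rfl, .refl⟩
  | tail _ hstep ih =>
    obtain ⟨s, rfl, hts⟩ := ih
    rcases hstep with hstep | hstep
    · obtain ⟨s', rfl, hss'⟩ := hstep.exists_of_isRightCanonical hu hv hw
      exact ⟨s', rfl, hts.tail (.of_rel hss')⟩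
    · obtain ⟨s', rfl, hss'⟩ := hstep.symm.exists_of_isRightCanonical hv hu hw
      exact ⟨s', rfl, hts.tail (.of_rel_symm hss'.symm)⟩

end RightCanonical

theorem embed_prefix_general {A : Type*} (u v r : FreeMonoid A)
    (h2 : ∃ a, u = a * r) (h4 : ∃ a, v = a * r) :
    ∀ t t' w w' : FreeMonoid A,
      w ∈ ProperPrefixes r → w' ∈ ProperPrefixes r →
      (oneRelCon u v (t * r * w) (t' * r * w') ↔
        (w = w' ∧ oneRelCon u v (t * r) (t' * r))) := by
  intro t t' w w' hw hw'
  have hc := isRightCanonical_of_mem_properPrefixes hw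
  have hc' := isRightCanonical_of_mem_properPrefixes hw'
  rw [oneRelCon, conGen_eq_rewritesCon]
  constructor
  · intro h
    obtain ⟨s, hs, hts⟩ := exists_rewritesCon_of_isRightCanonical h2 h4 hc h
    obtain ⟨rfl, rfl⟩ := hc'.eq_of_mul_eq hc hs
    exact ⟨rfl, hts⟩
  · rintro ⟨rfl, h⟩
    exact (rewritesCon u v).mul h ((rewritesCon u v).refl w)

/-- Let `M = ⟨A | u = v⟩` with `r` compressing `u = v`.  For
`t, t' ∈ A*` and `w, w' ∈ P_{Δ_r}`:
`[t·r·w]_M = [t'·r·w']_M` iff `w = w'` and `[t·r]_M = [t'·r]_M`. -/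
theorem embed_prefix {A : Type*} (u v r : FreeMonoid A) (hr : r ≠ 1)
    (h1 : ∃ a, u = r * a) (h2 : ∃ a, u = a * r)
    (h3 : ∃ a, v = r * a) (h4 : ∃ a, v = a * r) :
    ∀ t t' w w' : FreeMonoid A,
      w ∈ ProperPrefixes r → w' ∈ ProperPrefixes r →
      (oneRelCon u v (t * r * w) (t' * r * w') ↔
        (w = w' ∧ oneRelCon u v (t * r) (t' * r))) :=
  embed_prefix_general u v r h2 h4
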